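/- Let S be a data independent memory system all of whose traces are causal, let Ω be a simple witness, and fix k with 1 ≤ k ≤ min{n,m}. Then there is a canonical k-nice cycle in G(Ω)(τ) for some unambiguous trace τ of S(n,m) if and only if there is a trace τ' of S(n,m,2) such that τ' satisfies Constrain_k(j) for all 1 ≤ j ≤ m and τ' satisfies Check_k(i) for all 1 ≤ i ≤ k. -/

import Mathlib

/-- A memory operation: read or write. -/
inductive MemOp : Type
  | R : MemOp
  | W : MemOp
deriving DecidableEq

/-- A memory event ⟨op, proc, loc, data⟩. -/
structure MemEvent : Type where
  op : MemOp
  proc : ℕ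
  loc : ℕ
  data : ℕ
deriving DecidableEq

instance : Inhabited MemEvent := ⟨⟨MemOp.R, 1, 1, 0⟩⟩

/-- A trace is a finite sequence of memory events (1-indexed via `ev`). -/
abbrev MTrace := List MemEvent

/-- The x-th event of a trace (1-indexed). -/
def ev (τ : MTrace) (x : ℕ) : MemEvent := τ.getD (x - 1) default

/-- dom(τ) = {1, …, |τ|}. -/
def Dom (τ : MTrace) : Set ℕ := {x | 1 ≤ x ∧ x ≤ τ.length}

/-- P(τ,i): indices of events of processor i. -/
def Pset (τ : MTrace) (i : ℕ) : Set ℕ := {x | x ∈ Dom τ ∧ (ev τ x).proc = i}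

/-- L(τ,j): indices of events to location j. -/
def Lset (τ : MTrace) (j : ℕ) : Set ℕ := {x | x ∈ Dom τ ∧ (ev τ x).loc = j}

/-- L^w(τ,j): indices of write events to location j. -/
def Lw (τ : MTrace) (j : ℕ) : Set ℕ := {x | x ∈ Lset τ j ∧ (ev τ x).op = MemOp.W}

/-- L^r(τ,j): indices of read events to location j. -/
def Lr (τ : MTrace) (j : ℕ) : Set ℕ := {x | x ∈ Lset τ j ∧ (ev τ x).op = MemOp.R}

/-- A trace is unambiguous if every write event has a nonzero data value distinct
from that of every other write event to the same location. -/
def Unambiguous (τ : MTrace) : Prop :=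
  ∀ j, ∀ x ∈ Lw τ j, (ev τ x).data ≠ 0 ∧
    ∀ y ∈ Lw τ j, y ≠ x → (ev τ y).data ≠ (ev τ x).data

/-- A trace is causal if the data value of every read event is 0 or equals the data
value of some write event to the same location. -/
def Causal (τ : MTrace) : Prop :=
  ∀ j, ∀ x ∈ Lr τ j, (ev τ x).data = 0 ∨ ∃ y ∈ Lw τ j, (ev τ y).data = (ev τ x).data

/-- ⟨x,y⟩ ∈ M(τ,i): the total order on P(τ,i) given by index order. -/
def Mrel (τ : MTrace) (i : ℕ) (x y : ℕ) : Prop :=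
  x ∈ Pset τ i ∧ y ∈ Pset τ i ∧ x < y

/-- A sequence of memory events (given by its length and 1-indexed access function)
is serial: each event's data value equals that of the latest write to the same
location at an index no larger than its own, and equals 0 if no such write exists. -/
def SerialFn (len : ℕ) (e : ℕ → MemEvent) : Prop :=
  ∀ u, 1 ≤ u → u ≤ len →
    ((∀ k, 1 ≤ k → k ≤ u → ¬((e k).op = MemOp.W ∧ (e k).loc = (e u).loc)) →
       (e u).data = 0) ∧
    (∀ k, 1 ≤ k → k ≤ u → (e k).op = MemOp.W → (e k).loc = (e u).loc →
       (∀ k', k < k' → k' ≤ u → ¬((e k').op = MemOp.W ∧ (e k').loc = (e u).loc)) →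
       (e u).data = (e k).data)

/-- f (with inverse g) is a permutation of {1,…,|τ|} satisfying conditions C1 and C2. -/
def IsSCWitness (τ : MTrace) (f g : ℕ → ℕ) : Prop :=
  (∀ u ∈ Dom τ, f u ∈ Dom τ) ∧
  (∀ u ∈ Dom τ, g u ∈ Dom τ) ∧
  (∀ u ∈ Dom τ, g (f u) = u) ∧
  (∀ u ∈ Dom τ, f (g u) = u) ∧
  (∀ i u v, Mrel τ i u v → f u < f v) ∧
  SerialFn τ.length (fun x => ev τ (g x))

/-- A trace is sequentially consistent if some permutation satisfies C1 and C2. -/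
def SeqConsistent (τ : MTrace) : Prop := ∃ f g, IsSCWitness τ f g

/-- A witness assigns to each trace and location a strict total order on L^w(τ,j). -/
def IsWitness (Ω : MTrace → ℕ → ℕ → ℕ → Prop) : Prop :=
  ∀ τ j,
    (∀ x y, Ω τ j x y → x ∈ Lw τ j ∧ y ∈ Lw τ j) ∧
    (∀ x, ¬ Ω τ j x x) ∧
    (∀ x y z, Ω τ j x y → Ω τ j y z → Ω τ j x z) ∧
    (∀ x y, x ∈ Lw τ j → y ∈ Lw τ j → x ≠ y → Ω τ j x y ∨ Ω τ j y x)

/-- A witness is simple if it orders the writes to each location by index order. -/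
def IsSimple (Ω : MTrace → ℕ → ℕ → ℕ → Prop) : Prop :=
  ∀ τ j x y, Ω τ j x y ↔ (x ∈ Lw τ j ∧ y ∈ Lw τ j ∧ x < y)

/-- ⟨x,y⟩ ∈ Ω^e(τ,j): the extension of the witness order to all events to location j. -/
def OmegaE (Ω : MTrace → ℕ → ℕ → ℕ → Prop) (τ : MTrace) (j x y : ℕ) : Prop :=
  x ∈ Lset τ j ∧ y ∈ Lset τ j ∧
  (((ev τ x).data = (ev τ y).data ∧ (ev τ x).op = MemOp.W ∧ (ev τ y).op = MemOp.R) ∨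
   ((ev τ x).data = 0 ∧ (ev τ y).data ≠ 0) ∨
   (∃ a b, a ∈ Lw τ j ∧ b ∈ Lw τ j ∧ Ω τ j a b ∧
      (ev τ a).data = (ev τ x).data ∧ (ev τ b).data = (ev τ y).data))

/-- Edge of the constraint graph G(Ω)(τ): union of the M(τ,i) and the Ω^e(τ,j). -/
def GEdge (Ω : MTrace → ℕ → ℕ → ℕ → Prop) (τ : MTrace) (x y : ℕ) : Prop :=
  (∃ i, Mrel τ i x y) ∨ (∃ j, OmegaE Ω τ j x y)

/-- The constraint graph G(Ω)(τ) has a cycle. -/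
def HasCycle (Ω : MTrace → ℕ → ℕ → ℕ → Prop) (τ : MTrace) : Prop :=
  ∃ x, Relation.TransGen (GEdge Ω τ) x x

/-- The constraint graph G(Ω)(τ) is acyclic. -/
def Acyclic (Ω : MTrace → ℕ → ℕ → ℕ → Prop) (τ : MTrace) : Prop :=
  ¬ HasCycle Ω τ

/-- All events of the trace have processor in {1,…,n} and location in {1,…,m}. -/
def InRange (n m : ℕ) (τ : MTrace) : Prop :=
  ∀ e ∈ τ, 1 ≤ e.proc ∧ e.proc ≤ n ∧ 1 ≤ e.loc ∧ e.loc ≤ m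

/-- All data values in the trace lie in {0,…,v}. -/
def DataBounded (v : ℕ) (τ : MTrace) : Prop := ∀ e ∈ τ, e.data ≤ v

/-- A memory system with n processors and m locations: for each v ≥ 1, a set S(n,m,v)
of traces whose processors, locations, and data values are in range. -/
structure MemSystem (n m : ℕ) : Type where
  S : ℕ → Set MTrace
  wf : ∀ v, 1 ≤ v → ∀ τ ∈ S v, InRange n m τ ∧ DataBounded v τ

/-- S(n,m): the union of the S(n,m,v) over v ≥ 1. -/
def MemSystem.traces {n m : ℕ} (M : MemSystem n m) : Set MTrace :=
  {τ | ∃ v, 1 ≤ v ∧ τ ∈ M.S v}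

/-- A renaming function λ with λ(j,0) = 0 for every location j. -/
def IsRenaming (lam : ℕ → ℕ → ℕ) : Prop := ∀ j, lam j 0 = 0

/-- λ^d: rename the data value of each event according to its location. -/
def renameD (lam : ℕ → ℕ → ℕ) (τ : MTrace) : MTrace :=
  τ.map fun e => { e with data := lam e.loc e.data }

/-- The memory system is data independent: a trace is in S(n,m,v) iff it is obtained
from an unambiguous trace of S(n,m) by a renaming function with values in {0,…,v}. -/
def DataIndependent {n m : ℕ} (M : MemSystem n m) : Prop :=
  ∀ v, 1 ≤ v → ∀ τ, τ ∈ M.S v ↔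
    ∃ τ' lam, τ' ∈ M.traces ∧ Unambiguous τ' ∧ IsRenaming lam ∧
      (∀ j d, lam j d ≤ v) ∧ τ = renameD lam τ'

/-- λ^p: rename the processor of each event. -/
def renameP (lam : ℕ → ℕ) (τ : MTrace) : MTrace :=
  τ.map fun e => { e with proc := lam e.proc }

/-- λ^l: rename the location of each event. -/
def renameL (lam : ℕ → ℕ) (τ : MTrace) : MTrace :=
  τ.map fun e => { e with loc := lam e.loc }

/-- λ is a permutation of {1,…,n}. -/
def PermOn (n : ℕ) (lam : ℕ → ℕ) : Prop :=
  Set.BijOn lam (Set.Icc 1 n) (Set.Icc 1 n)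

/-- The memory system is processor symmetric. -/
def ProcSymmetric {n m : ℕ} (M : MemSystem n m) : Prop :=
  ∀ lam, PermOn n lam → ∀ v τ, τ ∈ M.S v → renameP lam τ ∈ M.S v

/-- The memory system is location symmetric. -/
def LocSymmetric {n m : ℕ} (M : MemSystem n m) : Prop :=
  ∀ lam, PermOn m lam → ∀ v τ, τ ∈ M.S v → renameL lam τ ∈ M.S v

/-- x ⊕ 1 in the cyclic group {1,…,k} with identity k. -/
def cyc (k x : ℕ) : ℕ := if x = k then 1 else x + 1

/-- A k-nice cycle u_1,v_1,…,u_k,v_k in G(Ω)(τ): distinct vertices; each ⟨u_x,v_x⟩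
is a processor edge, each ⟨v_x,u_{x⊕1}⟩ a location edge; no processor (resp.
location) contributes two edges. -/
def NiceCycle (Ω : MTrace → ℕ → ℕ → ℕ → Prop) (τ : MTrace) (k : ℕ)
    (u v : ℕ → ℕ) : Prop :=
  1 ≤ k ∧
  (∀ x ∈ Set.Icc 1 k, ∀ y ∈ Set.Icc 1 k, x ≠ y → u x ≠ u y) ∧
  (∀ x ∈ Set.Icc 1 k, ∀ y ∈ Set.Icc 1 k, x ≠ y → v x ≠ v y) ∧
  (∀ x ∈ Set.Icc 1 k, ∀ y ∈ Set.Icc 1 k, u x ≠ v y) ∧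
  (∀ x ∈ Set.Icc 1 k, ∃ i, Mrel τ i (u x) (v x)) ∧
  (∀ x ∈ Set.Icc 1 k, ∃ j, OmegaE Ω τ j (v x) (u (cyc k x))) ∧
  (∀ x ∈ Set.Icc 1 k, ∀ y ∈ Set.Icc 1 k, x ≠ y → ∀ i,
     Mrel τ i (u x) (v x) → ¬ Mrel τ i (u y) (v y)) ∧
  (∀ x ∈ Set.Icc 1 k, ∀ y ∈ Set.Icc 1 k, x ≠ y → ∀ j,
     OmegaE Ω τ j (v x) (u (cyc k x)) → ¬ OmegaE Ω τ j (v y) (u (cyc k y)))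

/-- A canonical k-nice cycle: a k-nice cycle whose processor edges are in M(τ,x) and
whose location edges are in Ω^e(τ,x⊕1), for x = 1,…,k. -/
def CanonicalNiceCycle (Ω : MTrace → ℕ → ℕ → ℕ → Prop) (τ : MTrace) (k : ℕ)
    (u v : ℕ → ℕ) : Prop :=
  NiceCycle Ω τ k u v ∧
  (∀ x ∈ Set.Icc 1 k, Mrel τ x (u x) (v x)) ∧
  (∀ x ∈ Set.Icc 1 k, OmegaE Ω τ (cyc k x) (v x) (u (cyc k x)))

/-- The trace satisfies the automaton Constrain_k(j). -/
def ConstrainK (k j : ℕ) (τ : MTrace) : Prop :=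
  (j ≤ k →
    (∀ x ∈ Lw τ j, (ev τ x).data ≤ 2) ∧
    (∀ x ∈ Lw τ j, ∀ y ∈ Lw τ j, (ev τ x).data = 1 → (ev τ y).data = 1 → x = y) ∧
    (∀ x ∈ Lw τ j, ∀ y ∈ Lw τ j, (ev τ x).data = 0 → (ev τ y).data ≠ 0 → x < y) ∧
    (∀ y ∈ Lw τ j, (ev τ y).data = 2 → ∃ x ∈ Lw τ j, (ev τ x).data = 1 ∧ x < y)) ∧
  (k < j → ∀ x ∈ Lw τ j, (ev τ x).data = 0)

/-- The trace satisfies the automaton Check_k(i). -/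
def CheckK (k i : ℕ) (τ : MTrace) : Prop :=
  ∃ x ∈ Dom τ, ∃ y ∈ Dom τ, x < y ∧
    (ev τ x).proc = i ∧ (ev τ x).loc = i ∧
    ((ev τ x).data = 1 ∨ (ev τ x).data = 2) ∧
    (ev τ y).proc = i ∧ (ev τ y).loc = cyc k i ∧
    ((ev τ y).data = 0 ∨ ((ev τ y).op = MemOp.W ∧ (ev τ y).data = 1))

/-
For a simple witness and an unambiguous causal trace, whether `⟨y, x⟩ ∈ Ω^e(τ,j)` only depends
on where the values of `y` and `x` stand among the writes to `j`. In a canonical cycle, `u j`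
carries the value of some write `w j` to `j`, the pivot. Renaming that value to 1, the values of
later writes to `j` to 2 and all other values to 0 makes the writes to `j` follow the pattern
`0…0 1 2…2` of `Constrain_k(j)`, and turns each processor edge `⟨u i, v i⟩` into a witness of
`Check_k(i)`. Conversely, data independence presents a trace of `S(n,m,2)` as such a renaming of
an unambiguous trace of `S(n,m)`, `Constrain_k(j)` lets one read the order of the relevant
writes back off the renamed values, and the `Check_k` witnesses form a canonical cycle because
a canonical cycle is nothing more than its `k` processor edges and `k` location edges.
-/

section Cyclic

variable {k : ℕ}

theorem cyc_mapsTo : Set.MapsTo (cyc k) (Set.Icc 1 k) (Set.Icc 1 k) := by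
  intro x ⟨h1, h2⟩
  unfold cyc
  split_ifs <;> constructor <;> omega

theorem cyc_injOn : Set.InjOn (cyc k) (Set.Icc 1 k) := by
  intro x ⟨_, _⟩ y ⟨_, _⟩ h
  unfold cyc at h
  split_ifs at h <;> omega

theorem cyc_surjOn : Set.SurjOn (cyc k) (Set.Icc 1 k) (Set.Icc 1 k) := by
  intro j ⟨h1, h2⟩
  by_cases hj : j = 1
  · exact ⟨k, ⟨by omega, le_rfl⟩, by simp [cyc, hj]⟩
  · exact ⟨j - 1, ⟨by omega, by omega⟩, by unfold cyc; split_ifs <;> omega⟩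

end Cyclic

section Renaming

variable {lam : ℕ → ℕ → ℕ} {τ : MTrace}

theorem ev_renameD (hlam : IsRenaming lam) (τ : MTrace) (x : ℕ) :
    ev (renameD lam τ) x = { ev τ x with data := lam (ev τ x).loc (ev τ x).data } := by
  have hdefault : (fun e : MemEvent => { e with data := lam e.loc e.data }) default = default := by
    simp [default, hlam 1]
  unfold ev renameD
  conv_lhs => rw [← hdefault]
  exact List.getD_map _ _ _

theorem Dom_renameD (lam : ℕ → ℕ → ℕ) (τ : MTrace) : Dom (renameD lam τ) = Dom τ := by
  simp [Dom, renameD]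

theorem Lw_renameD (hlam : IsRenaming lam) (τ : MTrace) (j : ℕ) :
    Lw (renameD lam τ) j = Lw τ j := by
  simp [Lw, Lset, Dom_renameD, ev_renameD hlam]

theorem data_renameD_of_mem_Lset (hlam : IsRenaming lam) {j x : ℕ} (hx : x ∈ Lset τ j) :
    (ev (renameD lam τ) x).data = lam j (ev τ x).data := by
  rw [ev_renameD hlam, hx.2]

theorem checkK_renameD_iff (hlam : IsRenaming lam) (k i : ℕ) :
    CheckK k i (renameD lam τ) ↔
      ∃ x ∈ Dom τ, ∃ y ∈ Dom τ, x < y ∧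
        (ev τ x).proc = i ∧ (ev τ x).loc = i ∧
        (lam i (ev τ x).data = 1 ∨ lam i (ev τ x).data = 2) ∧
        (ev τ y).proc = i ∧ (ev τ y).loc = cyc k i ∧
        (lam (cyc k i) (ev τ y).data = 0 ∨
          ((ev τ y).op = MemOp.W ∧ lam (cyc k i) (ev τ y).data = 1)) := by
  simp only [CheckK, Dom_renameD, ev_renameD hlam]
  constructor
  · rintro ⟨x, hx, y, hy, hxy, hxp, hxl, hxd, hyp, hyl, hyd⟩
    rw [hxl] at hxd
    rw [hyl] at hyd
    exact ⟨x, hx, y, hy, hxy, hxp, hxl, hxd, hyp, hyl, hyd⟩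
  · rintro ⟨x, hx, y, hy, hxy, hxp, hxl, hxd, hyp, hyl, hyd⟩
    refine ⟨x, hx, y, hy, hxy, hxp, hxl, ?_, hyp, hyl, ?_⟩
    · rwa [hxl]
    · rwa [hyl]

end Renaming

section Constrain

variable {k j : ℕ} {τ : MTrace}

theorem constrainK_of_data_eq_zero (h : ∀ x ∈ Lw τ j, (ev τ x).data = 0) :
    ConstrainK k j τ := by
  refine ⟨fun _ => ⟨?_, ?_, ?_, ?_⟩, fun _ => h⟩
  · exact fun x hx => by simp [h x hx]
  · exact fun x hx _ _ hx1 => by simp [h x hx] at hx1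
  · exact fun _ _ y hy _ hy0 => absurd (h y hy) hy0
  · exact fun y hy hy2 => by simp [h y hy] at hy2

theorem constrainK_of_data_eq_pivot (hjk : j ≤ k) {p : ℕ} (hp : p ∈ Lw τ j)
    (h : ∀ x ∈ Lw τ j, (ev τ x).data = if x = p then 1 else if p < x then 2 else 0) :
    ConstrainK k j τ := by
  refine ⟨fun _ => ⟨?_, ?_, ?_, ?_⟩, fun hkj => absurd hjk (by omega)⟩
  · intro x hx
    rw [h x hx]
    split_ifs <;> omega
  · intro x hx y hy hx1 hy1
    rw [h x hx] at hx1
    rw [h y hy] at hy1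
    split_ifs at hx1 hy1 <;> omega
  · intro x hx y hy hx0 hy0
    rw [h x hx] at hx0
    rw [h y hy] at hy0
    split_ifs at hx0 hy0 <;> omega
  · intro y hy hy2
    rw [h y hy] at hy2
    refine ⟨p, hp, by simp [h p hp], ?_⟩
    split_ifs at hy2 <;> omega

theorem ConstrainK.lt_of_data (hC : ConstrainK k j τ) (hjk : j ≤ k) {a b : ℕ}
    (ha : a ∈ Lw τ j) (hb : b ∈ Lw τ j) (hab : a ≠ b)
    (had : (ev τ a).data = 0 ∨ (ev τ a).data = 1)
    (hbd : (ev τ b).data = 1 ∨ (ev τ b).data = 2) : a < b := by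
  obtain ⟨-, hone, hzero, htwo⟩ := hC.1 hjk
  rcases had with ha0 | ha1
  · exact hzero a ha b hb ha0 (by omega)
  rcases hbd with hb1 | hb2
  · exact absurd (hone a ha b hb ha1 hb1) hab
  · obtain ⟨c, hc, hc1, hcb⟩ := htwo b hb hb2
    rwa [← hone c hc a ha hc1 ha1]

end Constrain

section Edges

variable {Ω : MTrace → ℕ → ℕ → ℕ → Prop} {τ : MTrace} {j x y : ℕ}

theorem exists_mem_Lw_data_eq_of_causal (hCa : Causal τ) (hx : x ∈ Lset τ j)
    (hx0 : (ev τ x).data ≠ 0) : ∃ w ∈ Lw τ j, (ev τ w).data = (ev τ x).data := by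
  cases hop : (ev τ x).op with
  | W => exact ⟨x, ⟨hx, hop⟩, rfl⟩
  | R => exact (hCa j x ⟨hx, hop⟩).resolve_left hx0

theorem exists_mem_Lw_data_eq_of_omegaE (hCa : Causal τ) (h : OmegaE Ω τ j y x) :
    ∃ w ∈ Lw τ j, (ev τ w).data = (ev τ x).data := by
  obtain ⟨hy, hx, ⟨hd, hyW, -⟩ | ⟨-, hx0⟩ | ⟨-, b, -, hb, -, -, hbd⟩⟩ := h
  · exact ⟨y, ⟨hy, hyW⟩, hd⟩
  · exact exists_mem_Lw_data_eq_of_causal hCa hx hx0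
  · exact ⟨b, hb, hbd⟩

theorem Mrel.proc_left {i u v : ℕ} (h : Mrel τ i u v) : (ev τ u).proc = i := h.1.2

theorem Mrel.proc_right {i u v : ℕ} (h : Mrel τ i u v) : (ev τ v).proc = i := h.2.1.2

theorem OmegaE.loc_left (h : OmegaE Ω τ j y x) : (ev τ y).loc = j := h.1.2

theorem OmegaE.loc_right (h : OmegaE Ω τ j y x) : (ev τ x).loc = j := h.2.1.2

theorem canonicalNiceCycle_iff {k : ℕ} {u v : ℕ → ℕ} :
    CanonicalNiceCycle Ω τ k u v ↔
      1 ≤ k ∧ (∀ x ∈ Set.Icc 1 k, Mrel τ x (u x) (v x)) ∧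
        ∀ x ∈ Set.Icc 1 k, OmegaE Ω τ (cyc k x) (v x) (u (cyc k x)) := by
  refine ⟨fun h => ⟨h.1.1, h.2⟩, fun ⟨hk, hM, hE⟩ => ⟨⟨hk, ?_, ?_, ?_, fun x hx => ⟨x, hM x hx⟩,
    fun x hx => ⟨cyc k x, hE x hx⟩, ?_, ?_⟩, hM, hE⟩⟩
  · intro x hx y hy hxy h
    exact hxy (by rw [← (hM x hx).proc_left, h, (hM y hy).proc_left])
  · intro x hx y hy hxy h
    exact hxy (by rw [← (hM x hx).proc_right, h, (hM y hy).proc_right])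
  · intro x hx y hy h
    obtain rfl : x = y := by rw [← (hM x hx).proc_left, h, (hM y hy).proc_right]
    exact (hM x hx).2.2.ne h
  · intro x hx y hy hxy i hx' hy'
    exact hxy (by rw [← (hM x hx).proc_left, hx'.proc_left, ← hy'.proc_left, (hM y hy).proc_left])
  · intro x hx y hy hxy j' hx' hy'
    refine hxy (cyc_injOn hx hy ?_)
    rw [← (hE x hx).loc_left, hx'.loc_left, ← hy'.loc_left, (hE y hy).loc_left]

end Edges

section Pivot

variable {Ω : MTrace → ℕ → ℕ → ℕ → Prop} {τ : MTrace} {k : ℕ} {w : ℕ → ℕ}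

open Classical in
noncomputable def pivotRenaming (τ : MTrace) (k : ℕ) (w : ℕ → ℕ) (j d : ℕ) : ℕ :=
  if j ∈ Set.Icc 1 k then
    if d = (ev τ (w j)).data then 1
    else if ∃ x ∈ Lw τ j, (ev τ x).data = d ∧ w j < x then 2 else 0
  else 0

theorem pivotRenaming_le_two (j d : ℕ) : pivotRenaming τ k w j d ≤ 2 := by
  unfold pivotRenaming
  split_ifs <;> omega

theorem pivotRenaming_pivot {j : ℕ} (hj : j ∈ Set.Icc 1 k) :
    pivotRenaming τ k w j (ev τ (w j)).data = 1 := by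
  simp [pivotRenaming, hj]

theorem isRenaming_pivotRenaming (hUn : Unambiguous τ) (hw : ∀ j ∈ Set.Icc 1 k, w j ∈ Lw τ j) :
    IsRenaming (pivotRenaming τ k w) := by
  intro j
  unfold pivotRenaming
  split_ifs with hj hpivot hlater
  · exact absurd hpivot.symm (hUn j _ (hw j hj)).1
  · obtain ⟨x, hx, hx0, -⟩ := hlater
    exact absurd hx0 (hUn j x hx).1
  · rfl
  · rfl

theorem pivotRenaming_of_mem_Lw (hUn : Unambiguous τ) {j x : ℕ} (hj : j ∈ Set.Icc 1 k)
    (hwj : w j ∈ Lw τ j) (hx : x ∈ Lw τ j) :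
    pivotRenaming τ k w j (ev τ x).data = if x = w j then 1 else if w j < x then 2 else 0 := by
  have hinj : ∀ y ∈ Lw τ j, (ev τ y).data = (ev τ x).data → y = x := fun y hy hyx => by
    by_contra hne
    exact (hUn j x hx).2 y hy hne hyx
  simp only [pivotRenaming, if_pos hj]
  by_cases hxw : x = w j
  · simp [hxw]
  · have hlater : (∃ y ∈ Lw τ j, (ev τ y).data = (ev τ x).data ∧ w j < y) ↔ w j < x :=
      ⟨fun ⟨y, hy, hyx, hlt⟩ => hinj y hy hyx ▸ hlt, fun hlt => ⟨x, hx, rfl, hlt⟩⟩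
    have hpivot : (ev τ x).data ≠ (ev τ (w j)).data := fun h => hxw (hinj _ hwj h.symm).symm
    simp only [if_neg hpivot, if_neg hxw, hlater]

theorem constrainK_renameD_pivotRenaming (hUn : Unambiguous τ)
    (hw : ∀ j ∈ Set.Icc 1 k, w j ∈ Lw τ j) (j : ℕ) :
    ConstrainK k j (renameD (pivotRenaming τ k w) τ) := by
  have hlam := isRenaming_pivotRenaming hUn hw
  by_cases hj : j ∈ Set.Icc 1 k
  · refine constrainK_of_data_eq_pivot hj.2 (p := w j) ?_ fun x hx => ?_
    · rw [Lw_renameD hlam]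
      exact hw j hj
    rw [Lw_renameD hlam] at hx
    rw [data_renameD_of_mem_Lset hlam hx.1, pivotRenaming_of_mem_Lw hUn hj (hw j hj) hx]
  · refine constrainK_of_data_eq_zero fun x hx => ?_
    rw [Lw_renameD hlam] at hx
    rw [data_renameD_of_mem_Lset hlam hx.1]
    simp [pivotRenaming, hj]

theorem pivotRenaming_of_omegaE (hS : IsSimple Ω) (hUn : Unambiguous τ) {j x y : ℕ}
    (hj : j ∈ Set.Icc 1 k) (hwj : w j ∈ Lw τ j) (hwx : (ev τ (w j)).data = (ev τ x).data)
    (hlam : IsRenaming (pivotRenaming τ k w)) (h : OmegaE Ω τ j y x) :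
    pivotRenaming τ k w j (ev τ y).data = 0 ∨
      ((ev τ y).op = MemOp.W ∧ pivotRenaming τ k w j (ev τ y).data = 1) := by
  obtain ⟨-, -, ⟨hd, hyW, -⟩ | ⟨hy0, -⟩ | ⟨a, b, ha, hb, hab, had, hbd⟩⟩ := h
  · exact Or.inr ⟨hyW, by rw [hd, ← hwx, pivotRenaming_pivot hj]⟩
  · exact Or.inl (by rw [hy0, hlam j])
  · have hbw : b = w j := by
      by_contra hne
      exact (hUn j _ hwj).2 b hb hne (hbd.trans hwx.symm)
    have hab : a < w j := hbw ▸ ((hS τ j a b).mp hab).2.2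
    left
    rw [← had, pivotRenaming_of_mem_Lw hUn hj hwj ha, if_neg hab.ne, if_neg (by omega)]

theorem exists_renaming_of_canonical_edges (hS : IsSimple Ω) (hUn : Unambiguous τ)
    (hCa : Causal τ) {u v : ℕ → ℕ} (hM : ∀ x ∈ Set.Icc 1 k, Mrel τ x (u x) (v x))
    (hE : ∀ x ∈ Set.Icc 1 k, OmegaE Ω τ (cyc k x) (v x) (u (cyc k x))) :
    ∃ lam, IsRenaming lam ∧ (∀ j d, lam j d ≤ 2) ∧ (∀ j, ConstrainK k j (renameD lam τ)) ∧
      ∀ i ∈ Set.Icc 1 k, CheckK k i (renameD lam τ) := by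
  have hpivot : ∀ j ∈ Set.Icc 1 k,
      (ev τ (u j)).loc = j ∧ ∃ p ∈ Lw τ j, (ev τ p).data = (ev τ (u j)).data := fun j hj => by
    obtain ⟨x, hx, rfl⟩ := cyc_surjOn hj
    exact ⟨(hE x hx).loc_right, exists_mem_Lw_data_eq_of_omegaE hCa (hE x hx)⟩
  choose! hul w hw hwu using hpivot
  have hlam := isRenaming_pivotRenaming hUn hw
  refine ⟨pivotRenaming τ k w, hlam, pivotRenaming_le_two,
    constrainK_renameD_pivotRenaming hUn hw, fun i hi => ?_⟩
  have hci := cyc_mapsTo hi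
  obtain ⟨⟨hu, hup⟩, ⟨hv, hvp⟩, huv⟩ := hM i hi
  rw [checkK_renameD_iff hlam]
  refine ⟨u i, hu, v i, hv, huv, hup, hul i hi,
    Or.inl (by rw [← hwu i hi, pivotRenaming_pivot hi]), hvp, (hE i hi).loc_left, ?_⟩
  exact pivotRenaming_of_omegaE hS hUn hci (hw _ hci) (hwu _ hci) hlam (hE i hi)

end Pivot

section Recovery

variable {Ω : MTrace → ℕ → ℕ → ℕ → Prop} {τ : MTrace} {lam : ℕ → ℕ → ℕ} {k j : ℕ}

theorem omegaE_of_renamed_data (hS : IsSimple Ω) (hUn : Unambiguous τ) (hCa : Causal τ)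
    (hlam : IsRenaming lam) (hjk : j ≤ k) (hC : ConstrainK k j (renameD lam τ)) {x y : ℕ}
    (hy : y ∈ Lset τ j) (hx : x ∈ Lset τ j) (hyx : y ≠ x)
    (hyd : lam j (ev τ y).data = 0 ∨ ((ev τ y).op = MemOp.W ∧ lam j (ev τ y).data = 1))
    (hxd : lam j (ev τ x).data = 1 ∨ lam j (ev τ x).data = 2) :
    OmegaE Ω τ j y x := by
  have hx0 : (ev τ x).data ≠ 0 := fun h => by
    rw [h, hlam j] at hxd
    omega
  by_cases hy0 : (ev τ y).data = 0
  · exact ⟨hy, hx, Or.inr (Or.inl ⟨hy0, hx0⟩)⟩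
  by_cases hdata : (ev τ y).data = (ev τ x).data
  · have hyW : (ev τ y).op = MemOp.W := by
      rcases hyd with h | h
      · rw [hdata] at h
        omega
      · exact h.1
    cases hop : (ev τ x).op with
    | R => exact ⟨hy, hx, Or.inl ⟨hdata, hyW, hop⟩⟩
    | W => exact absurd hdata ((hUn j x ⟨hx, hop⟩).2 y ⟨hy, hyW⟩ hyx)
  obtain ⟨a, ha, had⟩ := exists_mem_Lw_data_eq_of_causal hCa hy hy0
  obtain ⟨b, hb, hbd⟩ := exists_mem_Lw_data_eq_of_causal hCa hx hx0
  have hrename : ∀ z ∈ Lw τ j, (ev (renameD lam τ) z).data = lam j (ev τ z).data :=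
    fun z hz => data_renameD_of_mem_Lset hlam hz.1
  have hab : a < b := by
    refine hC.lt_of_data hjk (by rwa [Lw_renameD hlam]) (by rwa [Lw_renameD hlam])
      (fun h => hdata (by rw [← had, ← hbd, h])) ?_ ?_
    · rw [hrename a ha, had]
      rcases hyd with h | h
      · exact Or.inl h
      · exact Or.inr h.2
    · rwa [hrename b hb, hbd]
  exact ⟨hy, hx, Or.inr (Or.inr ⟨a, b, ha, hb, (hS τ j a b).mpr ⟨ha, hb, hab⟩, had, hbd⟩)⟩

theorem exists_canonical_edges_of_renaming (hS : IsSimple Ω) (hUn : Unambiguous τ)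
    (hCa : Causal τ) (hlam : IsRenaming lam)
    (hCon : ∀ j ∈ Set.Icc 1 k, ConstrainK k j (renameD lam τ))
    (hChk : ∀ i ∈ Set.Icc 1 k, CheckK k i (renameD lam τ)) :
    ∃ u v : ℕ → ℕ, (∀ x ∈ Set.Icc 1 k, Mrel τ x (u x) (v x)) ∧
      ∀ x ∈ Set.Icc 1 k, OmegaE Ω τ (cyc k x) (v x) (u (cyc k x)) := by
  simp only [checkK_renameD_iff hlam] at hChk
  choose! u hu v hv huv hup hul hud hvp hvl hvd using hChk
  refine ⟨u, v, fun x hx => ⟨⟨hu x hx, hup x hx⟩, ⟨hv x hx, hvp x hx⟩, huv x hx⟩, fun x hx => ?_⟩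
  have hcx := cyc_mapsTo hx
  have hne : v x ≠ u (cyc k x) := fun h => by
    have hfix : cyc k x = x := by rw [← hup _ hcx, ← h, hvp x hx]
    rw [hfix] at h
    exact (huv x hx).ne' h
  exact omegaE_of_renamed_data hS hUn hCa hlam hcx.2 (hCon _ hcx) ⟨hv x hx, hvl x hx⟩
    ⟨hu _ hcx, hul _ hcx⟩ hne (hvd x hx) (hud _ hcx)

end Recovery

theorem canonical_nice_cycle_iff_model_check_general
    (n m k : ℕ) (hk : 1 ≤ k) (hkm : k ≤ min n m)
    (M : MemSystem n m) (hDI : DataIndependent M) (hC : ∀ τ ∈ M.traces, Causal τ)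
    (Ω : MTrace → ℕ → ℕ → ℕ → Prop) (hS : IsSimple Ω) :
    (∃ τ ∈ M.traces, Unambiguous τ ∧ ∃ u w, CanonicalNiceCycle Ω τ k u w) ↔
      (∃ τ' ∈ M.S 2, (∀ j, 1 ≤ j → j ≤ m → ConstrainK k j τ') ∧
        (∀ i, 1 ≤ i → i ≤ k → CheckK k i τ')) := by
  constructor
  · rintro ⟨τ, hτ, hUn, u, v, hcycle⟩
    obtain ⟨-, hM, hE⟩ := canonicalNiceCycle_iff.mp hcycle
    obtain ⟨lam, hlam, hle, hCon, hChk⟩ :=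
      exists_renaming_of_canonical_edges hS hUn (hC τ hτ) hM hE
    exact ⟨renameD lam τ, (hDI 2 one_le_two _).mpr ⟨τ, lam, hτ, hUn, hlam, hle, rfl⟩,
      fun j _ _ => hCon j, fun i hi hik => hChk i ⟨hi, hik⟩⟩
  · rintro ⟨τ', hτ', hCon, hChk⟩
    obtain ⟨τ, lam, hτ, hUn, hlam, -, rfl⟩ := (hDI 2 one_le_two τ').mp hτ'
    have hkm' : k ≤ m := hkm.trans (min_le_right n m)
    obtain ⟨u, v, hM, hE⟩ := exists_canonical_edges_of_renaming hS hUn (hC τ hτ) hlam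
      (fun j hj => hCon j hj.1 (hj.2.trans hkm')) (fun i hi => hChk i hi.1 hi.2)
    exact ⟨τ, hτ, hUn, u, v, canonicalNiceCycle_iff.mpr ⟨hk, hM, hE⟩⟩

/-- For a data independent memory system all of whose traces are causal,
and a simple witness Ω: some unambiguous trace of S(n,m) has a canonical k-nice cycle
iff some trace of S(n,m,2) satisfies Constrain_k(j) for all 1 ≤ j ≤ m and
Check_k(i) for all 1 ≤ i ≤ k. -/
theorem canonical_nice_cycle_iff_model_check
    (n m k : ℕ) (hn : 1 ≤ n) (hm : 1 ≤ m) (hk : 1 ≤ k) (hkm : k ≤ min n m)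
    (M : MemSystem n m) (hDI : DataIndependent M) (hC : ∀ τ ∈ M.traces, Causal τ)
    (Ω : MTrace → ℕ → ℕ → ℕ → Prop) (hΩ : IsWitness Ω) (hS : IsSimple Ω) :
    (∃ τ ∈ M.traces, Unambiguous τ ∧ ∃ u w, CanonicalNiceCycle Ω τ k u w) ↔
      (∃ τ' ∈ M.S 2, (∀ j, 1 ≤ j → j ≤ m → ConstrainK k j τ') ∧
        (∀ i, 1 ≤ i → i ≤ k → CheckK k i τ')) :=
  canonical_nice_cycle_iff_model_check_general n m k hk hkm M hDI hC Ω hS
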